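/- arXiv:1511.07957 — 2 statements merged into one kernel-verified Lean document; each statement's English description precedes it below -/
import Mathlib

section
/- Let L ≥ 1, N a positive integer, Δx = L/N ≤ 1, and let H = Δ + V act on L-periodic lattice functions on 𝒳 = {iΔx : i = 0,…,N−1}, where Δ = 𝒟⁺𝒟⁻ is the second-order finite difference Laplacian and V : 𝒳 → ℝ. Assume λ ∈ ℂ is such that (λ − H)⁻¹ exists and its operator norm on L²(𝒳) is bounded by a constant M. Then there exist constants γ₀ > 0 and C > 0, depending only on M, |λ|, and ‖V‖_{L^∞(𝒳)} (and in particular independent of L ≥ 1 and Δx ≤ 1), such that for all 0 < γ ≤ γ₀, sup_{y ∈ 𝒳} ‖ e^{γ d_L(·,y)} (λ − H)⁻¹ e^{−γ d_L(·,y)} ‖_{L²(𝒳) → L²(𝒳)} ≤ C, where e^{±γ d_L(·,y)} are the multiplication operators (e^{±γ d_L(·,y)} f)(x) = e^{±γ d_L(x,y)} f(x). -/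
open scoped BigOperators Real
open MeasureTheory

noncomputable section

/-- The periodic distance `min_{k ∈ ℤ} |x - L k|`. -/
def dtilde (L x : ℝ) : ℝ := sInf {r : ℝ | ∃ k : ℤ, r = |x - L * k|}

/-- The mollified periodic distance `d_L(x, 0)`. -/
def dmol (L x : ℝ) : ℝ :=
  Real.sqrt (L ^ 2 / 4 + 1) -
    Real.sqrt ((Real.sqrt (L ^ 2 / 4 + 1) - Real.sqrt (dtilde L x ^ 2 + 1)) ^ 2 + 1)

/-- The mollified periodic distance `d_L(x, y)`. -/
def dL (L x y : ℝ) : ℝ := dmol L (x - y)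

/-- The grid point `x_i = i Δx`, with `Δx = L / N`. -/
def gridX (L : ℝ) (N : ℕ) (i : ZMod N) : ℝ := (ZMod.val i : ℝ) * (L / N)

/-- Forward difference operator on periodic lattice functions. -/
def Dplus {N : ℕ} (dx : ℝ) (f : ZMod N → ℂ) : ZMod N → ℂ :=
  fun i => (f (i + 1) - f i) / (dx : ℂ)

/-- Backward difference operator on periodic lattice functions. -/
def Dminus {N : ℕ} (dx : ℝ) (f : ZMod N → ℂ) : ZMod N → ℂ :=
  fun i => (f i - f (i - 1)) / (dx : ℂ)

/-- Second order finite difference Laplacian `Δ = 𝒟⁺𝒟⁻`. -/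
def discLap {N : ℕ} (dx : ℝ) (f : ZMod N → ℂ) : ZMod N → ℂ :=
  Dplus dx (Dminus dx f)

/-- Weighted `ℓ²` norm `(w Σ |f i|²)^{1/2}`; with `w = Δx` this is `‖·‖_{L²(𝒳)}`,
with `w = Δk` this is `‖·‖_{L²(𝒦)}`. -/
def wnorm {N : ℕ} [NeZero N] (w : ℝ) (f : ZMod N → ℂ) : ℝ :=
  Real.sqrt (w * ∑ i : ZMod N, ‖f i‖ ^ 2)

/-- The Fourier grid point `k = n Δk` with `n ∈ (-N/2, N/2]` corresponding to `j ∈ ZMod N`. -/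
def kval (L : ℝ) (N : ℕ) (j : ZMod N) : ℝ :=
  ((if (ZMod.val j : ℤ) ≤ (N : ℤ) / 2 then (ZMod.val j : ℤ) else (ZMod.val j : ℤ) - (N : ℤ)) : ℝ) *
    (2 * Real.pi / L)

/-- Discrete Fourier transform `f̂_k = Δx Σ_x e^{-i k x} f(x)`. -/
def dft (L : ℝ) {N : ℕ} [NeZero N] (f : ZMod N → ℂ) (j : ZMod N) : ℂ :=
  ((L / N : ℝ) : ℂ) *
    ∑ i : ZMod N, Complex.exp (-Complex.I * (kval L N j : ℂ) * ((gridX L N i : ℝ) : ℂ)) * f i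

/-- Inverse discrete Fourier transform `f(x) = (1/L) Σ_k e^{i k x} f̂_k`. -/
def idft (L : ℝ) {N : ℕ} [NeZero N] (fh : ZMod N → ℂ) (i : ZMod N) : ℂ :=
  ((1 / L : ℝ) : ℂ) *
    ∑ j : ZMod N, Complex.exp (Complex.I * (kval L N j : ℂ) * ((gridX L N i : ℝ) : ℂ)) * fh j

/-- Periodic difference operator on the Fourier grid, `(𝒟 f̂)_k = (f̂_k - f̂_{k-Δk})/Δk`. -/
def Dk {N : ℕ} (dk : ℝ) (fh : ZMod N → ℂ) : ZMod N → ℂ :=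
  fun j => (fh j - fh (j - 1)) / (dk : ℂ)

/-- Real-valued version of the periodic difference operator on the Fourier grid. -/
def DkR {N : ℕ} (dk : ℝ) (fh : ZMod N → ℝ) : ZMod N → ℝ :=
  fun j => (fh j - fh (j - 1)) / dk

/-- The distance `d(x,0)`: equal to `x` on `[0, L/2)` and `L - x` on `[L/2, L)`. -/
def dfun (L x : ℝ) : ℝ := if x < L / 2 then x else L - x

/-- The mollified symbol `ĥ_k = θ̂(k)(k² - k_c²) + k_c²` on the Fourier grid, `k_c = π N / L`. -/
def hsym (L : ℝ) (N : ℕ) (θ : ℝ → ℝ) (j : ZMod N) : ℝ :=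
  θ (kval L N j) * ((kval L N j) ^ 2 - (Real.pi * N / L) ^ 2) + (Real.pi * N / L) ^ 2

/-- The Fourier space Hamiltonian matrix `Ĥ_{kl} = ĥ_k δ_{kl} + (1/L) V̂_{k-l}`. -/
def Hmat (L : ℝ) {N : ℕ} [NeZero N] (hh : ZMod N → ℝ) (V : ZMod N → ℝ) :
    Matrix (ZMod N) (ZMod N) ℂ :=
  Matrix.of fun k l =>
    (if k = l then (hh k : ℂ) else 0) + ((1 / L : ℝ) : ℂ) * dft L (fun i => (V i : ℂ)) (k - l)

end


/-!
Combes–Thomas argument. Put `g = e^{γd} G e^{-γd} f`. Conjugation by `e^{γd}` changes only the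
Laplacian, so `(λ - H) g = f + p` with the commutator `p = e^{γd} Δ e^{-γd} g - Δ g`, and
`g = G f + G p`. Because `d` changes by at most `Δx` between neighbouring grid points, summation by
parts gives `|⟨w, p⟩| ≲ γ (‖w‖ ‖𝒟⁺g‖ + ‖𝒟⁺w‖ ‖g‖)`. The energy identity bounds `‖𝒟⁺g‖` by
`‖g‖ + ‖f‖` and `‖𝒟⁺ G u‖` by `‖u‖`; as `λ - H` is symmetric, so is `G`, and duality then gives
`‖G p‖ ≲ γ (‖g‖ + ‖f‖)`, which for small `γ` is absorbed: `‖g‖ ≤ (2M + 1) ‖f‖`. The only place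
`Δx` enters is `γ |d(x + Δx) - d(x)| ≤ γ Δx ≤ 1`, so the constants do not depend on `L` or `Δx`.
-/

open ComplexConjugate

section Lattice

variable {N : ℕ}

theorem discLap_apply (h : ℝ) (u : ZMod N → ℂ) (i : ZMod N) :
    discLap h u i = (u (i + 1) - 2 * u i + u (i - 1)) / (h : ℂ) ^ 2 := by
  simp only [discLap, Dplus, Dminus, add_sub_cancel_right]
  ring

theorem discLap_add (h : ℝ) (u v : ZMod N → ℂ) (i : ZMod N) :
    discLap h (u + v) i = discLap h u i + discLap h v i := by
  simp only [discLap_apply, Pi.add_apply]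
  ring

theorem Dminus_conj (h : ℝ) (u : ZMod N → ℂ) (i : ZMod N) :
    Dminus h (fun j => conj (u j)) i = conj (Dminus h u i) := by
  simp [Dminus, map_div₀, Complex.conj_ofReal]

theorem Dplus_conj (h : ℝ) (u : ZMod N → ℂ) (i : ZMod N) :
    Dplus h (fun j => conj (u j)) i = conj (Dplus h u i) := by
  simp [Dplus, map_div₀, Complex.conj_ofReal]

noncomputable def lamSubHam (h : ℝ) (V : ZMod N → ℝ) (lam : ℂ) (f : ZMod N → ℂ) : ZMod N → ℂ :=
  fun i => lam * f i - (discLap h f i + (V i : ℂ) * f i)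

theorem lamSubHam_add (h : ℝ) (V : ZMod N → ℝ) (lam : ℂ) (u v : ZMod N → ℂ) :
    lamSubHam h V lam (u + v) = lamSubHam h V lam u + lamSubHam h V lam v := by
  funext i
  simp only [lamSubHam, discLap_add, Pi.add_apply]
  ring

theorem map_add_of_inverse {α : Type*} [Add α] {T G : α → α}
    (hT : ∀ x y, T (x + y) = T x + T y) (hGT : ∀ x, G (T x) = x) (hTG : ∀ x, T (G x) = x)
    (x y : α) : G (x + y) = G x + G y := by
  rw [← hGT (G x + G y), hT, hTG, hTG]

end Lattice

section SummationByParts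

variable {N : ℕ} [NeZero N]

theorem sum_mul_Dplus (h : ℝ) (u v : ZMod N → ℂ) :
    ∑ i, u i * Dplus h v i = -∑ i, Dminus h u i * v i := by
  have hshift : ∑ i, u i * v (i + 1) = ∑ i, u (i - 1) * v i := by
    rw [← Equiv.sum_comp (Equiv.addRight (1 : ZMod N)) (fun i => u (i - 1) * v i)]
    simp
  simp only [Dplus, Dminus, sub_div, mul_sub, sub_mul, Finset.sum_sub_distrib, mul_div_assoc',
    div_mul_eq_mul_div, ← Finset.sum_div, hshift]
  ring

theorem sum_mul_discLap_comm (h : ℝ) (u v : ZMod N → ℂ) :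
    ∑ i, u i * discLap h v i = ∑ i, discLap h u i * v i := by
  simp only [discLap, sum_mul_Dplus, mul_comm _ (v _), mul_comm (Dminus h u _)]

theorem sum_conj_mul_discLap (h : ℝ) (g : ZMod N → ℂ) :
    ∑ i, conj (g i) * discLap h g i = -∑ i, ((‖Dminus h g i‖ ^ 2 : ℝ) : ℂ) := by
  simp only [discLap, sum_mul_Dplus, Dminus_conj, Complex.conj_mul', Complex.ofReal_pow]

theorem sum_lamSubHam_mul_comm (h : ℝ) (V : ZMod N → ℝ) (lam : ℂ) (u v : ZMod N → ℂ) :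
    ∑ i, lamSubHam h V lam u i * v i = ∑ i, u i * lamSubHam h V lam v i := by
  have hl : ∀ i, lamSubHam h V lam u i * v i
      = lam * (u i * v i) - discLap h u i * v i - (V i : ℂ) * (u i * v i) := fun i => by
    simp only [lamSubHam]; ring
  have hr : ∀ i, u i * lamSubHam h V lam v i
      = lam * (u i * v i) - u i * discLap h v i - (V i : ℂ) * (u i * v i) := fun i => by
    simp only [lamSubHam]; ring
  simp only [hl, hr, Finset.sum_sub_distrib, sum_mul_discLap_comm]

theorem sum_resolvent_mul_comm {h : ℝ} {V : ZMod N → ℝ} {lam : ℂ}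
    {G : (ZMod N → ℂ) → ZMod N → ℂ} (hTG : ∀ u, lamSubHam h V lam (G u) = u)
    (u v : ZMod N → ℂ) : ∑ i, G u i * v i = ∑ i, u i * G v i := by
  conv_lhs => rw [← hTG v]
  rw [← sum_lamSubHam_mul_comm, hTG]

end SummationByParts

section L2

variable {N : ℕ} [NeZero N]

noncomputable def l2norm (f : ZMod N → ℂ) : ℝ := √(∑ i, ‖f i‖ ^ 2)

theorem l2norm_nonneg (f : ZMod N → ℂ) : 0 ≤ l2norm f := Real.sqrt_nonneg _

theorem sq_l2norm (f : ZMod N → ℂ) : l2norm f ^ 2 = ∑ i, ‖f i‖ ^ 2 :=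
  Real.sq_sqrt (Finset.sum_nonneg fun _ _ => by positivity)

theorem wnorm_eq_sqrt_mul_l2norm {w : ℝ} (hw : 0 ≤ w) (f : ZMod N → ℂ) :
    wnorm w f = √w * l2norm f := by
  rw [wnorm, l2norm, Real.sqrt_mul hw]

theorem l2norm_add_le (f g : ZMod N → ℂ) : l2norm (f + g) ≤ l2norm f + l2norm g := by
  have h := norm_add_le (WithLp.toLp 2 f : EuclideanSpace ℂ (ZMod N)) (WithLp.toLp 2 g)
  simpa only [← WithLp.toLp_add, EuclideanSpace.norm_eq, l2norm] using h

theorem l2norm_le_of_norm_le {u v : ZMod N → ℂ} {c : ℝ} (hc : 0 ≤ c)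
    (huv : ∀ i, ‖u i‖ ≤ c * ‖v i‖) : l2norm u ≤ c * l2norm v := by
  rw [l2norm, l2norm, ← Real.sqrt_sq hc, ← Real.sqrt_mul (sq_nonneg c), Finset.mul_sum]
  exact Real.sqrt_le_sqrt <| Finset.sum_le_sum fun i _ => by
    rw [← mul_pow]; exact pow_le_pow_left₀ (norm_nonneg _) (huv i) 2

theorem l2norm_congr {u v : ZMod N → ℂ} (huv : ∀ i, ‖u i‖ = ‖v i‖) : l2norm u = l2norm v := by
  simp only [l2norm, huv]

theorem l2norm_conj (u : ZMod N → ℂ) : l2norm (fun i => conj (u i)) = l2norm u :=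
  l2norm_congr fun _ => RCLike.norm_conj _

theorem l2norm_comp_add_one (u : ZMod N → ℂ) : l2norm (fun i => u (i + 1)) = l2norm u := by
  simp only [l2norm]
  exact congrArg _ (Equiv.sum_comp (Equiv.addRight (1 : ZMod N)) (fun i => ‖u i‖ ^ 2))

theorem l2norm_Dplus (h : ℝ) (u : ZMod N → ℂ) : l2norm (Dplus h u) = l2norm (Dminus h u) := by
  rw [← l2norm_comp_add_one (Dminus h u)]
  congr 1
  funext i
  simp only [Dplus, Dminus, add_sub_cancel_right]

theorem norm_sum_mul_le (u v : ZMod N → ℂ) : ‖∑ i, u i * v i‖ ≤ l2norm u * l2norm v :=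
  (norm_sum_le _ _).trans <| by
    simpa only [norm_mul, l2norm] using Real.sum_mul_le_sqrt_mul_sqrt Finset.univ (‖u ·‖) (‖v ·‖)

theorem norm_sum_ofReal_mul_mul_le {c : ZMod N → ℝ} {B : ℝ} (hB : 0 ≤ B) (hc : ∀ i, |c i| ≤ B)
    (u v : ZMod N → ℂ) : ‖∑ i, (c i : ℂ) * u i * v i‖ ≤ B * (l2norm u * l2norm v) := by
  have hcu : l2norm (fun i => (c i : ℂ) * u i) ≤ B * l2norm u :=
    l2norm_le_of_norm_le hB fun i => by
      rw [norm_mul, Complex.norm_real, Real.norm_eq_abs]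
      exact mul_le_mul_of_nonneg_right (hc i) (norm_nonneg _)
  calc ‖∑ i, (c i : ℂ) * u i * v i‖ ≤ l2norm (fun i => (c i : ℂ) * u i) * l2norm v :=
        norm_sum_mul_le _ v
    _ ≤ B * l2norm u * l2norm v := mul_le_mul_of_nonneg_right hcu (l2norm_nonneg v)
    _ = B * (l2norm u * l2norm v) := mul_assoc _ _ _

theorem sum_conj_mul_self (f : ZMod N → ℂ) :
    ∑ i, conj (f i) * f i = ((l2norm f ^ 2 : ℝ) : ℂ) := by
  simp only [Complex.conj_mul', sq_l2norm, Complex.ofReal_sum, Complex.ofReal_pow]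

end L2

section Energy

variable {N : ℕ} [NeZero N] {h : ℝ} {V : ZMod N → ℝ} {W : ℝ} {lam : ℂ}

/-- The energy identity `⟨g, (λ - H) g⟩ = λ ‖g‖² + ‖𝒟⁻g‖² - ⟨g, V g⟩`, read off in real part. -/
theorem sq_l2norm_Dminus_le (hV : ∀ i, |V i| ≤ W) (g : ZMod N → ℂ) :
    l2norm (Dminus h g) ^ 2 ≤
      (‖lam‖ + W) * l2norm g ^ 2 + ‖∑ i, conj (g i) * lamSubHam h V lam g i‖ := by
  set S := ∑ i, conj (g i) * lamSubHam h V lam g i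
  have hpt : ∀ i, conj (g i) * lamSubHam h V lam g i = lam * (conj (g i) * g i)
      - conj (g i) * discLap h g i - ((V i * ‖g i‖ ^ 2 : ℝ) : ℂ) := fun i => by
    simp only [lamSubHam, Complex.ofReal_mul, Complex.ofReal_pow, ← Complex.conj_mul']
    ring
  have hS : S = lam * ((l2norm g ^ 2 : ℝ) : ℂ) + ((l2norm (Dminus h g) ^ 2 : ℝ) : ℂ)
      - ((∑ i, V i * ‖g i‖ ^ 2 : ℝ) : ℂ) := by
    simp only [S, hpt, Finset.sum_sub_distrib, ← Finset.mul_sum, sum_conj_mul_self,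
      sum_conj_mul_discLap, sq_l2norm, Complex.ofReal_sum]
    ring
  have hre := congrArg Complex.re hS
  simp only [Complex.sub_re, Complex.add_re, Complex.mul_re, Complex.ofReal_re,
    Complex.ofReal_im, mul_zero, sub_zero] at hre
  have hVg : ∑ i, V i * ‖g i‖ ^ 2 ≤ W * l2norm g ^ 2 := by
    rw [sq_l2norm, Finset.mul_sum]
    exact Finset.sum_le_sum fun i _ =>
      mul_le_mul_of_nonneg_right (le_of_abs_le (hV i)) (by positivity)
  have hlam : -lam.re * l2norm g ^ 2 ≤ ‖lam‖ * l2norm g ^ 2 :=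
    mul_le_mul_of_nonneg_right ((neg_le_abs _).trans (Complex.abs_re_le_norm lam)) (by positivity)
  linarith [Complex.re_le_norm S]

theorem l2norm_Dplus_resolvent_le {Λ M : ℝ} {G : (ZMod N → ℂ) → ZMod N → ℂ}
    (hV : ∀ i, |V i| ≤ W) (hlam : ‖lam‖ ≤ Λ) (hM : 0 ≤ M)
    (hTG : ∀ u, lamSubHam h V lam (G u) = u) (hG : ∀ u, l2norm (G u) ≤ M * l2norm u)
    (u : ZMod N → ℂ) : l2norm (Dplus h (G u)) ≤ (Λ + W + 1) * (M + 1) * l2norm u := by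
  have hΛW : 0 ≤ Λ + W := add_nonneg ((norm_nonneg lam).trans hlam) ((abs_nonneg _).trans (hV 0))
  have hGu_sq : l2norm (G u) ^ 2 ≤ (M * l2norm u) ^ 2 :=
    pow_le_pow_left₀ (l2norm_nonneg _) (hG u) 2
  have hpair : ‖∑ i, conj (G u i) * u i‖ ≤ M * l2norm u * l2norm u :=
    (norm_sum_mul_le _ u).trans <| by
      rw [l2norm_conj]; exact mul_le_mul_of_nonneg_right (hG u) (l2norm_nonneg u)
  have henergy := sq_l2norm_Dminus_le (h := h) (lam := lam) hV (G u)
  rw [hTG] at henergy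
  have hlamW : (‖lam‖ + W) * l2norm (G u) ^ 2 ≤ (Λ + W) * (M * l2norm u) ^ 2 :=
    mul_le_mul (by linarith) hGu_sq (sq_nonneg _) hΛW
  rw [l2norm_Dplus, ← pow_le_pow_iff_left₀ (l2norm_nonneg _)
    (mul_nonneg (by positivity) (l2norm_nonneg u)) two_ne_zero]
  have hconst : (Λ + W) * M ^ 2 + M ≤ ((Λ + W + 1) * (M + 1)) ^ 2 := by
    nlinarith [mul_nonneg hΛW hM, mul_nonneg (mul_nonneg hΛW hM) hM]
  nlinarith [mul_le_mul_of_nonneg_right hconst (sq_nonneg (l2norm u))]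

end Energy

theorem abs_exp_sub_one_le_of_abs_le {s t : ℝ} (hs : |s| ≤ t) (ht : t ≤ 1) :
    |Real.exp s - 1| ≤ 2 * t :=
  (Real.abs_exp_sub_one_le (hs.trans ht)).trans (by linarith)

/-- The first-order terms of `e^s - 1` and `e^{-s} - 1` cancel. -/
theorem abs_exp_sub_one_add_exp_neg_sub_one_le {s t : ℝ} (hs : |s| ≤ t) (ht : t ≤ 1) :
    |Real.exp s - 1 + (Real.exp (-s) - 1)| ≤ 2 * t ^ 2 := by
  have h1 := Real.abs_exp_sub_one_sub_id_le (hs.trans ht)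
  have h2 := Real.abs_exp_sub_one_sub_id_le ((abs_neg s).le.trans (hs.trans ht))
  have hs2 : s ^ 2 ≤ t ^ 2 := by
    rw [← sq_abs]; exact pow_le_pow_left₀ (abs_nonneg s) hs 2
  calc |Real.exp s - 1 + (Real.exp (-s) - 1)|
      = |(Real.exp s - 1 - s) + (Real.exp (-s) - 1 - -s)| := by ring_nf
    _ ≤ s ^ 2 + (-s) ^ 2 := (abs_add_le _ _).trans (add_le_add h1 h2)
    _ ≤ 2 * t ^ 2 := by nlinarith

section ExpWeight

variable {N : ℕ}

noncomputable def expWeight (γ : ℝ) (d : ZMod N → ℝ) (g : ZMod N → ℂ) : ZMod N → ℂ :=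
  fun i => (Real.exp (γ * d i) : ℂ) * g i

theorem exp_mul_exp_neg_mul (γ a b : ℝ) :
    (Real.exp (γ * a) : ℂ) * (Real.exp (-γ * b) : ℂ) = (Real.exp (γ * (a - b)) : ℂ) := by
  rw [← Complex.ofReal_mul, ← Real.exp_add]
  ring_nf

theorem expWeight_expWeight_neg (γ : ℝ) (d : ZMod N → ℝ) (g : ZMod N → ℂ) :
    expWeight γ d (expWeight (-γ) d g) = g := by
  funext i
  simp only [expWeight, ← mul_assoc, exp_mul_exp_neg_mul, sub_self, mul_zero, Real.exp_zero,
    Complex.ofReal_one, one_mul]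

noncomputable def expCommutator (h γ : ℝ) (d : ZMod N → ℝ) (g : ZMod N → ℂ) : ZMod N → ℂ :=
  expWeight γ d (discLap h (expWeight (-γ) d g)) - discLap h g

theorem lamSubHam_eq_expWeight_add (h : ℝ) (V : ZMod N → ℝ) (lam : ℂ) (γ : ℝ)
    (d : ZMod N → ℝ) (g : ZMod N → ℂ) :
    lamSubHam h V lam g =
      expWeight γ d (lamSubHam h V lam (expWeight (-γ) d g)) + expCommutator h γ d g := by
  funext i
  have hg := congrFun (expWeight_expWeight_neg γ d g) i
  simp only [expWeight] at hg
  simp only [lamSubHam, expCommutator, expWeight, Pi.add_apply, Pi.sub_apply]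
  linear_combination (-lam + (V i : ℂ)) * hg

theorem lamSubHam_expWeight_resolvent {h : ℝ} {V : ZMod N → ℝ} {lam : ℂ}
    {G : (ZMod N → ℂ) → ZMod N → ℂ} (hTG : ∀ u, lamSubHam h V lam (G u) = u) (γ : ℝ)
    (d : ZMod N → ℝ) (f : ZMod N → ℂ) :
    lamSubHam h V lam (expWeight γ d (G (expWeight (-γ) d f))) =
      f + expCommutator h γ d (expWeight γ d (G (expWeight (-γ) d f))) := by
  have hg : expWeight (-γ) d (expWeight γ d (G (expWeight (-γ) d f))) = G (expWeight (-γ) d f) := by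
    simpa only [neg_neg] using expWeight_expWeight_neg (-γ) d (G (expWeight (-γ) d f))
  rw [lamSubHam_eq_expWeight_add h V lam γ d, hg, hTG, expWeight_expWeight_neg]

theorem expCommutator_apply (h γ : ℝ) (d : ZMod N → ℝ) (g : ZMod N → ℂ) (i : ZMod N) :
    expCommutator h γ d g i =
      (((Real.exp (γ * (d i - d (i + 1))) - 1 : ℝ) : ℂ) * g (i + 1)
        + ((Real.exp (γ * (d i - d (i - 1))) - 1 : ℝ) : ℂ) * g (i - 1)) / (h : ℂ) ^ 2 := by
  have e := exp_mul_exp_neg_mul γ (d i)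
  simp only [expCommutator, expWeight, Pi.sub_apply, discLap_apply] at e ⊢
  have e0 := e (d i)
  rw [sub_self, mul_zero, Real.exp_zero, Complex.ofReal_one] at e0
  simp only [Complex.ofReal_sub, Complex.ofReal_one]
  linear_combination (g (i + 1) / (h : ℂ) ^ 2) * e (d (i + 1))
    + (g (i - 1) / (h : ℂ) ^ 2) * e (d (i - 1)) - (2 * g i / (h : ℂ) ^ 2) * e0

end ExpWeight

section Commutator

variable {N : ℕ} [NeZero N] {h γ : ℝ} {d : ZMod N → ℝ}

/-- Summation by parts pairs the coefficient of `g (i + 1)` in row `i` with that of `g i` in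
row `i + 1`; their exponents are opposite, so their sum is of second order. -/
theorem sum_mul_expCommutator_eq (w g : ZMod N → ℂ) :
    ∑ i, w i * expCommutator h γ d g i =
      ∑ i, (((Real.exp (γ * (d i - d (i + 1))) - 1) / h : ℝ) : ℂ) * w i * Dplus h g i
      - ∑ i, (((Real.exp (γ * (d i - d (i + 1))) - 1) / h : ℝ) : ℂ) * Dplus h w i * g i
      + ∑ i, (((Real.exp (γ * (d i - d (i + 1))) - 1
          + (Real.exp (-(γ * (d i - d (i + 1)))) - 1)) / h ^ 2 : ℝ) : ℂ) * w (i + 1) * g i := by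
  have hshift :
      ∑ i, w i * ((Real.exp (γ * (d i - d (i - 1))) - 1 : ℝ) : ℂ) * g (i - 1) / (h : ℂ) ^ 2
        = ∑ i, w (i + 1) * ((Real.exp (-(γ * (d i - d (i + 1)))) - 1 : ℝ) : ℂ) * g i
          / (h : ℂ) ^ 2 := by
    refine (Fintype.sum_equiv (Equiv.addRight 1) _ _ fun i => ?_).symm
    simp only [Equiv.coe_addRight, add_sub_cancel_right, neg_mul_eq_mul_neg, neg_sub]
  calc ∑ i, w i * expCommutator h γ d g i
      = ∑ i, (w i * ((Real.exp (γ * (d i - d (i + 1))) - 1 : ℝ) : ℂ) * g (i + 1) / (h : ℂ) ^ 2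
          + w i * ((Real.exp (γ * (d i - d (i - 1))) - 1 : ℝ) : ℂ) * g (i - 1) / (h : ℂ) ^ 2) :=
        Finset.sum_congr rfl fun i _ => by rw [expCommutator_apply]; ring
    _ = ∑ i, (w i * ((Real.exp (γ * (d i - d (i + 1))) - 1 : ℝ) : ℂ) * g (i + 1) / (h : ℂ) ^ 2
          + w (i + 1) * ((Real.exp (-(γ * (d i - d (i + 1)))) - 1 : ℝ) : ℂ) * g i
            / (h : ℂ) ^ 2) := by
        rw [Finset.sum_add_distrib, Finset.sum_add_distrib, hshift]
    _ = _ := by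
        rw [← Finset.sum_sub_distrib, ← Finset.sum_add_distrib]
        refine Finset.sum_congr rfl fun i _ => ?_
        simp only [Dplus]
        push_cast
        field_simp
        ring

theorem norm_sum_mul_expCommutator_le (hh : 0 < h) (hγ : 0 ≤ γ) (hγh : γ * h ≤ 1)
    (hd : ∀ i, |d (i + 1) - d i| ≤ h) (w g : ZMod N → ℂ) :
    ‖∑ i, w i * expCommutator h γ d g i‖ ≤
      2 * γ * (l2norm w * l2norm (Dplus h g) + l2norm (Dplus h w) * l2norm g)
        + 2 * γ ^ 2 * (l2norm w * l2norm g) := by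
  have hs : ∀ i, |γ * (d i - d (i + 1))| ≤ γ * h := fun i => by
    rw [abs_mul, abs_of_nonneg hγ, abs_sub_comm]
    exact mul_le_mul_of_nonneg_left (hd i) hγ
  have ha : ∀ i, |(Real.exp (γ * (d i - d (i + 1))) - 1) / h| ≤ 2 * γ := fun i => by
    rw [abs_div, abs_of_pos hh, div_le_iff₀ hh, mul_assoc]
    exact abs_exp_sub_one_le_of_abs_le (hs i) hγh
  have hab : ∀ i, |(Real.exp (γ * (d i - d (i + 1))) - 1
      + (Real.exp (-(γ * (d i - d (i + 1)))) - 1)) / h ^ 2| ≤ 2 * γ ^ 2 := fun i => by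
    rw [abs_div, abs_of_pos (pow_pos hh 2), div_le_iff₀ (pow_pos hh 2), mul_assoc, ← mul_pow]
    exact abs_exp_sub_one_add_exp_neg_sub_one_le (hs i) hγh
  have hB : 0 ≤ 2 * γ := by positivity
  rw [sum_mul_expCommutator_eq]
  refine (norm_add_le _ _).trans ?_
  refine (add_le_add_left (norm_sub_le _ _) _).trans ?_
  have h1 := norm_sum_ofReal_mul_mul_le hB ha w (Dplus h g)
  have h2 := norm_sum_ofReal_mul_mul_le hB ha (Dplus h w) g
  have h3 := norm_sum_ofReal_mul_mul_le (by positivity) hab (fun i => w (i + 1)) g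
  rw [l2norm_comp_add_one] at h3
  linarith

end Commutator

section CombesThomas

variable {N : ℕ} [NeZero N] {h γ M Λ W : ℝ} {V : ZMod N → ℝ} {lam : ℂ}
  {G : (ZMod N → ℂ) → ZMod N → ℂ} {d : ZMod N → ℝ}

theorem l2norm_Dplus_le_of_lamSubHam_eq_add (hV : ∀ i, |V i| ≤ W) (hlam : ‖lam‖ ≤ Λ)
    (hγ : 0 ≤ γ) (hγ1 : γ ≤ 1) {g f p : ZMod N → ℂ} (hg : lamSubHam h V lam g = f + p)
    (hp : ‖∑ i, conj (g i) * p i‖ ≤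
      2 * γ * (l2norm g * l2norm (Dplus h g) + l2norm (Dplus h g) * l2norm g)
        + 2 * γ ^ 2 * (l2norm g * l2norm g)) :
    l2norm (Dplus h g) ≤ 2 * (Λ + W + 10) * (l2norm g + l2norm f) := by
  have hΛW : 0 ≤ Λ + W := add_nonneg ((norm_nonneg lam).trans hlam) ((abs_nonneg _).trans (hV 0))
  have ha := l2norm_nonneg g
  have hb := l2norm_nonneg f
  have hX := l2norm_nonneg (Dplus h g)
  have henergy := sq_l2norm_Dminus_le (h := h) (lam := lam) hV g
  rw [hg, ← l2norm_Dplus] at henergy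
  have hsplit : ‖∑ i, conj (g i) * (f + p) i‖ ≤ l2norm g * l2norm f + ‖∑ i, conj (g i) * p i‖ := by
    simp only [Pi.add_apply, mul_add, Finset.sum_add_distrib]
    refine (norm_add_le _ _).trans (add_le_add_left ?_ _)
    simpa only [l2norm_conj] using norm_sum_mul_le (fun i => conj (g i)) f
  have hγX : γ * (l2norm g * l2norm (Dplus h g)) ≤ l2norm g * l2norm (Dplus h g) :=
    mul_le_of_le_one_left (by positivity) hγ1
  have hγ2 : γ ^ 2 * (l2norm g * l2norm g) ≤ l2norm g * l2norm g :=
    mul_le_of_le_one_left (by positivity) (pow_le_one₀ hγ hγ1)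
  have hlamW : ‖lam‖ * l2norm g ^ 2 ≤ Λ * l2norm g ^ 2 :=
    mul_le_mul_of_nonneg_right hlam (sq_nonneg _)
  have hX_sq : l2norm (Dplus h g) ^ 2 ≤ 2 * (Λ + W + 10) * (l2norm g + l2norm f) ^ 2 := by
    nlinarith [sq_nonneg (l2norm (Dplus h g) - 4 * l2norm g), mul_nonneg ha hb,
      mul_nonneg hΛW (add_nonneg (mul_nonneg ha hb) (sq_nonneg (l2norm f)))]
  have hconst : 2 * (Λ + W + 10) ≤ (2 * (Λ + W + 10)) ^ 2 := by nlinarith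
  rw [← pow_le_pow_iff_left₀ hX (by positivity) two_ne_zero, mul_pow]
  exact hX_sq.trans (mul_le_mul_of_nonneg_right hconst (sq_nonneg _))

/-- Duality: `‖G p‖² = Σ G (conj (G p)) · p` since `G` is symmetric, and `G (conj (G p))` is
bounded in `H¹`. -/
theorem l2norm_resolvent_expCommutator_le (hh : 0 < h) (hγ : 0 ≤ γ) (hγh : γ * h ≤ 1)
    (hd : ∀ i, |d (i + 1) - d i| ≤ h) (hV : ∀ i, |V i| ≤ W) (hlam : ‖lam‖ ≤ Λ) (hM : 0 ≤ M)
    (hTG : ∀ u, lamSubHam h V lam (G u) = u) (hG : ∀ u, l2norm (G u) ≤ M * l2norm u)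
    (g : ZMod N → ℂ) :
    l2norm (G (expCommutator h γ d g)) ≤
      2 * γ * (M * l2norm (Dplus h g) + ((Λ + W + 1) * (M + 1) + γ * M) * l2norm g) := by
  set p := expCommutator h γ d g
  set φ := G p
  set w := G (fun i => conj (φ i))
  have hφ_sq : l2norm φ ^ 2 ≤ ‖∑ i, w i * p i‖ := by
    rw [sum_resolvent_mul_comm hTG, sum_conj_mul_self, Complex.norm_real, Real.norm_eq_abs]
    exact le_abs_self _
  have hw : l2norm w ≤ M * l2norm φ := (hG _).trans_eq (by rw [l2norm_conj])
  have hDw : l2norm (Dplus h w) ≤ (Λ + W + 1) * (M + 1) * l2norm φ :=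
    (l2norm_Dplus_resolvent_le hV hlam hM hTG hG _).trans_eq (by rw [l2norm_conj])
  have hpair : ‖∑ i, w i * p i‖ ≤ l2norm φ *
      (2 * γ * (M * l2norm (Dplus h g) + ((Λ + W + 1) * (M + 1) + γ * M) * l2norm g)) := by
    refine (norm_sum_mul_expCommutator_le hh hγ hγh hd w g).trans ?_
    have hX := l2norm_nonneg (Dplus h g)
    have ha := l2norm_nonneg g
    calc 2 * γ * (l2norm w * l2norm (Dplus h g) + l2norm (Dplus h w) * l2norm g)
          + 2 * γ ^ 2 * (l2norm w * l2norm g)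
        ≤ 2 * γ * (M * l2norm φ * l2norm (Dplus h g)
          + (Λ + W + 1) * (M + 1) * l2norm φ * l2norm g)
          + 2 * γ ^ 2 * (M * l2norm φ * l2norm g) := by gcongr
      _ = _ := by ring
  have hΛW : 0 ≤ Λ + W := add_nonneg ((norm_nonneg lam).trans hlam) ((abs_nonneg _).trans (hV 0))
  have hB : 0 ≤ 2 * γ * (M * l2norm (Dplus h g) + ((Λ + W + 1) * (M + 1) + γ * M) * l2norm g) := by
    have := l2norm_nonneg (Dplus h g)
    have := l2norm_nonneg g
    positivity
  nlinarith [hφ_sq.trans hpair, l2norm_nonneg φ]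

end CombesThomas

theorem l2norm_expWeight_resolvent_le {N : ℕ} [NeZero N] {h γ M Λ W : ℝ} {V : ZMod N → ℝ}
    {lam : ℂ} {G : (ZMod N → ℂ) → ZMod N → ℂ} {d : ZMod N → ℝ}
    (hh : 0 < h) (hh1 : h ≤ 1) (hγ : 0 ≤ γ) (hγ₀ : 16 * γ * ((Λ + W + 10) * (M + 1)) ≤ 1)
    (hM : 0 ≤ M) (hV : ∀ i, |V i| ≤ W) (hlam : ‖lam‖ ≤ Λ)
    (hGT : ∀ u, G (lamSubHam h V lam u) = u) (hTG : ∀ u, lamSubHam h V lam (G u) = u)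
    (hG : ∀ u, l2norm (G u) ≤ M * l2norm u) (hd : ∀ i, |d (i + 1) - d i| ≤ h)
    (f : ZMod N → ℂ) :
    l2norm (expWeight γ d (G (expWeight (-γ) d f))) ≤ (2 * M + 1) * l2norm f := by
  have hΛW : 0 ≤ Λ + W := add_nonneg ((norm_nonneg lam).trans hlam) ((abs_nonneg _).trans (hV 0))
  have hK : 1 ≤ (Λ + W + 10) * (M + 1) := by nlinarith
  have hγ1 : γ ≤ 1 := by nlinarith
  set g := expWeight γ d (G (expWeight (-γ) d f))
  set p := expCommutator h γ d g
  have hTg : lamSubHam h V lam g = f + p := lamSubHam_expWeight_resolvent hTG γ d f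
  have hg_split : g = G f + G p := by
    rw [← map_add_of_inverse (lamSubHam_add h V lam) hGT hTG, ← hTg, hGT]
  have hDg : l2norm (Dplus h g) ≤ 2 * (Λ + W + 10) * (l2norm g + l2norm f) := by
    refine l2norm_Dplus_le_of_lamSubHam_eq_add hV hlam hγ hγ1 hTg ?_
    have hconj : Dplus h (fun i => conj (g i)) = fun i => conj (Dplus h g i) :=
      funext (Dplus_conj h g)
    simpa only [hconj, l2norm_conj] using
      norm_sum_mul_expCommutator_le hh hγ (by nlinarith) hd (fun i => conj (g i)) g
  have hφ := l2norm_resolvent_expCommutator_le (G := G) hh hγ (by nlinarith) hd hV hlam hM hTG hG g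
  have hφ' : l2norm (G p) ≤ (l2norm g + l2norm f) / 2 := by
    have ha := l2norm_nonneg g
    have hb := l2norm_nonneg f
    have hc : (Λ + W + 1) * (M + 1) + γ * M ≤ 2 * ((Λ + W + 10) * (M + 1)) := by nlinarith
    calc l2norm (G p)
        ≤ 2 * γ * (M * (2 * (Λ + W + 10) * (l2norm g + l2norm f))
          + 2 * ((Λ + W + 10) * (M + 1)) * (l2norm g + l2norm f)) := by
          refine hφ.trans ?_
          gcongr
          linarith
      _ ≤ 16 * γ * ((Λ + W + 10) * (M + 1)) * (l2norm g + l2norm f) / 2 := by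
          nlinarith [mul_nonneg (mul_nonneg hγ hΛW) (add_nonneg ha hb)]
      _ ≤ (l2norm g + l2norm f) / 2 := by
          gcongr
          exact (mul_le_of_le_one_left (add_nonneg ha hb) hγ₀)
  have hgf : l2norm g ≤ M * l2norm f + l2norm (G p) :=
    (hg_split ▸ l2norm_add_le _ _).trans (add_le_add_left (hG f) _)
  linarith

theorem dtilde_le (L x : ℝ) (k : ℤ) : dtilde L x ≤ |x - L * k| :=
  csInf_le ⟨0, fun _ ⟨_, hr⟩ => hr ▸ abs_nonneg _⟩ ⟨k, rfl⟩

theorem dtilde_le_add_abs_sub (L x y : ℝ) : dtilde L x ≤ dtilde L y + |x - y| := by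
  suffices dtilde L x - |x - y| ≤ dtilde L y by linarith
  refine le_csInf ⟨_, 0, rfl⟩ ?_
  rintro _ ⟨k, rfl⟩
  have h := abs_add_le (y - L * k) (x - y)
  rw [show y - L * k + (x - y) = x - L * k by ring] at h
  linarith [dtilde_le L x k]

theorem abs_dtilde_sub_le (L x y : ℝ) : |dtilde L x - dtilde L y| ≤ |x - y| :=
  abs_sub_le_iff.2 ⟨by linarith [dtilde_le_add_abs_sub L x y],
    by linarith [dtilde_le_add_abs_sub L y x, abs_sub_comm x y]⟩

theorem dtilde_periodic (L : ℝ) : Function.Periodic (dtilde L) L := fun x => by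
  unfold dtilde
  congr 1
  ext r
  constructor
  · rintro ⟨k, rfl⟩
    exact ⟨k - 1, by push_cast; ring_nf⟩
  · rintro ⟨k, rfl⟩
    exact ⟨k + 1, by push_cast; ring_nf⟩

theorem abs_sqrt_sq_add_one_sub_le (a b : ℝ) : |√(a ^ 2 + 1) - √(b ^ 2 + 1)| ≤ |a - b| := by
  have key : ∀ a b : ℝ, √(a ^ 2 + 1) ≤ √(b ^ 2 + 1) + |a - b| := fun a b => by
    have ha := Real.sq_sqrt (show (0 : ℝ) ≤ a ^ 2 + 1 by positivity)
    have hb := Real.sq_sqrt (show (0 : ℝ) ≤ b ^ 2 + 1 by positivity)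
    have hb' : |b| ≤ √(b ^ 2 + 1) := by
      rw [← Real.sqrt_sq_eq_abs]; exact Real.sqrt_le_sqrt (by linarith)
    have hab : |a| ≤ |b| + |a - b| := by simpa using abs_add_le b (a - b)
    nlinarith [Real.sqrt_nonneg (a ^ 2 + 1), Real.sqrt_nonneg (b ^ 2 + 1),
      abs_nonneg (a - b), abs_nonneg b, abs_nonneg a, sq_abs a, sq_abs b]
  exact abs_sub_le_iff.2 ⟨by linarith [key a b], by linarith [key b a, abs_sub_comm a b]⟩

theorem abs_dmol_sub_le (L x y : ℝ) : |dmol L x - dmol L y| ≤ |x - y| := by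
  set D := √(L ^ 2 / 4 + 1)
  calc |dmol L x - dmol L y|
      = |√((D - √(dtilde L y ^ 2 + 1)) ^ 2 + 1) - √((D - √(dtilde L x ^ 2 + 1)) ^ 2 + 1)| := by
        simp only [dmol, D]; ring_nf
    _ ≤ |√(dtilde L x ^ 2 + 1) - √(dtilde L y ^ 2 + 1)| :=
        (abs_sqrt_sq_add_one_sub_le _ _).trans_eq (by ring_nf)
    _ ≤ |x - y| := (abs_sqrt_sq_add_one_sub_le _ _).trans (abs_dtilde_sub_le L x y)

theorem dmol_periodic (L : ℝ) : Function.Periodic (dmol L) L := fun x => by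
  simp only [dmol, dtilde_periodic L x]

theorem gridX_add_one (L : ℝ) {N : ℕ} [NeZero N] (i : ZMod N) :
    gridX L N (i + 1) = gridX L N i + L / N ∨ gridX L N (i + 1) = gridX L N i + L / N - L := by
  have hN : (N : ℝ) ≠ 0 := Nat.cast_ne_zero.mpr (NeZero.ne N)
  have hval : (i + 1).val = (i.val + 1) % N := by
    rw [ZMod.val_add, ZMod.val_one_eq_one_mod, Nat.add_mod_mod]
  rcases lt_or_ge (i.val + 1) N with hlt | hge
  · left
    rw [gridX, gridX, hval, Nat.mod_eq_of_lt hlt]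
    push_cast
    ring
  · right
    have hi : i.val + 1 = N := le_antisymm (ZMod.val_lt i) hge
    have hiR : (i.val : ℝ) = N - 1 := by rw [eq_sub_iff_add_eq]; exact_mod_cast hi
    rw [gridX, gridX, hval, hi, Nat.mod_self, hiR]
    field_simp
    ring

theorem abs_dL_gridX_add_one_sub_le {L : ℝ} (hL : 0 ≤ L) {N : ℕ} [NeZero N] (x : ℝ) (i : ZMod N) :
    |dL L (gridX L N (i + 1)) x - dL L (gridX L N i) x| ≤ L / N := by
  have hstep := abs_dmol_sub_le L (gridX L N i + L / N - x) (gridX L N i - x)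
  rw [show gridX L N i + L / N - x - (gridX L N i - x) = L / N by ring,
    abs_of_nonneg (div_nonneg hL (Nat.cast_nonneg N))] at hstep
  rcases gridX_add_one L i with hi | hi <;> rw [dL, dL, hi]
  · exact hstep
  · rwa [show gridX L N i + L / N - L - x = gridX L N i + L / N - x - L by ring,
      (dmol_periodic L).sub_eq]

/-- exponential decay estimate for the finite difference resolvent,
with constants `γ₀, C` depending only on the resolvent bound `M`, `|λ| ≤ Λ` and
`‖V‖_∞ ≤ W`, uniformly in `L ≥ 1` and `Δx = L/N ≤ 1`. -/
theorem stmt_1 (M Λ W : ℝ) :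
    ∃ γ₀ > (0 : ℝ), ∃ C > (0 : ℝ),
      ∀ (L : ℝ) (N : ℕ) [NeZero N], 1 ≤ L → L / N ≤ 1 →
      ∀ V : ZMod N → ℝ, (∀ i, |V i| ≤ W) →
      ∀ lam : ℂ, ‖lam‖ ≤ Λ →
      ∀ G : (ZMod N → ℂ) → (ZMod N → ℂ),
        (∀ f, G (fun i => lam * f i - (discLap (L / N) f i + (V i : ℂ) * f i)) = f) →
        (∀ f, (fun i => lam * G f i - (discLap (L / N) (G f) i + (V i : ℂ) * G f i)) = f) →
        (∀ f, wnorm (L / N) (G f) ≤ M * wnorm (L / N) f) →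
      ∀ γ : ℝ, 0 < γ → γ ≤ γ₀ →
      ∀ (y : ZMod N) (f : ZMod N → ℂ),
        wnorm (L / N)
            (fun i => (Real.exp (γ * dL L (gridX L N i) (gridX L N y)) : ℂ) *
              G (fun j => (Real.exp (-γ * dL L (gridX L N j) (gridX L N y)) : ℂ) * f j) i) ≤
          C * wnorm (L / N) f := by
  refine ⟨1 / (16 * ((|Λ| + |W| + 10) * (|M| + 1))), by positivity, 2 * |M| + 1, by positivity, ?_⟩
  intro L N _ hL hLN V hV lam hlam G hGT hTG hGnorm γ hγ hγ₀ y f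
  have hh : 0 < L / N := div_pos (by linarith) (Nat.cast_pos.mpr (Nat.pos_of_neZero N))
  have hG : ∀ u, l2norm (G u) ≤ |M| * l2norm u := fun u => by
    have hu := hGnorm u
    rw [wnorm_eq_sqrt_mul_l2norm hh.le, wnorm_eq_sqrt_mul_l2norm hh.le, mul_left_comm] at hu
    exact (le_of_mul_le_mul_left hu (Real.sqrt_pos.2 hh)).trans
      (mul_le_mul_of_nonneg_right (le_abs_self M) (l2norm_nonneg u))
  have hγ₀' : 16 * γ * ((|Λ| + |W| + 10) * (|M| + 1)) ≤ 1 := by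
    rw [le_div_iff₀ (by positivity)] at hγ₀
    linarith
  have key := l2norm_expWeight_resolvent_le (d := fun i => dL L (gridX L N i) (gridX L N y))
    hh hLN hγ.le hγ₀' (abs_nonneg M) (fun i => (hV i).trans (le_abs_self W))
    (hlam.trans (le_abs_self Λ)) hGT hTG hG
    (abs_dL_gridX_add_one_sub_le (by linarith) (gridX L N y)) f
  rw [wnorm_eq_sqrt_mul_l2norm hh.le, wnorm_eq_sqrt_mul_l2norm hh.le]
  exact (mul_le_mul_of_nonneg_left key (Real.sqrt_nonneg _)).trans_eq (by ring)
end

section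
/- Let L ≥ 1, N a positive even integer, Δx = L/N, let g : 𝒳 → ℂ be a lattice function with discrete Fourier transform ĝ, and let m be a positive integer. Then ‖ d(·,0)^m g ‖_{L²(𝒳)} ≤ (π/2)^m (1/√(2π)) ‖ 𝒟^{(m)} ĝ ‖_{L²(𝒦)}, where 𝒟^{(m)} denotes the m-fold application of the periodic difference operator 𝒟 on the Fourier grid, and d(x,0) = x for x ∈ [0, L/2), d(x,0) = L − x for x ∈ [L/2, L). -/
open scoped BigOperators Real
open MeasureTheory

/-!
Multiplying a lattice function by `φ(x) = (1 - e^{iΔk x}) / Δk` turns its discrete Fourier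
transform `ĝ` into `𝒟 ĝ`, because multiplication by `e^{iΔk x}` shifts `ĝ` by one mode; hence
`𝒟^m ĝ` is the transform of `φ^m g`. Discrete Parseval gives `‖f̂‖_{L²(𝒦)} = √(2π) ‖f‖_{L²(𝒳)}`,
and `|φ(x)| = (L/π) sin(πx/L) ≥ (2/π) d(x,0)` by Jordan's inequality `sin t ≥ 2t/π` on `[0, π/2]`.
-/

open scoped ZMod ComplexConjugate
open Complex

theorem le_mul_sin_of_le_half {L y : ℝ} (hL : 0 < L) (hy0 : 0 ≤ y) (hy : y ≤ L / 2) :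
    y ≤ L / 2 * Real.sin (Real.pi * y / L) := by
  have hjordan := Real.mul_le_sin (x := Real.pi * y / L) (by positivity) (by
    rw [div_le_div_iff₀ hL two_pos]; nlinarith [Real.pi_pos])
  calc y = L / 2 * (2 / Real.pi * (Real.pi * y / L)) := by field_simp
    _ ≤ L / 2 * Real.sin (Real.pi * y / L) := by gcongr

theorem dfun_nonneg {L x : ℝ} (hx0 : 0 ≤ x) (hxL : x ≤ L) : 0 ≤ dfun L x := by
  unfold dfun
  split_ifs <;> linarith

theorem dfun_le_mul_sin {L x : ℝ} (hL : 0 < L) (hx0 : 0 ≤ x) (hxL : x ≤ L) :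
    dfun L x ≤ L / 2 * Real.sin (Real.pi * x / L) := by
  unfold dfun
  split_ifs with hx
  · exact le_mul_sin_of_le_half hL hx0 hx.le
  · have hsym : Real.pi * (L - x) / L = Real.pi - Real.pi * x / L := by field_simp
    rw [← Real.sin_pi_sub, ← hsym]
    exact le_mul_sin_of_le_half hL (by linarith) (by linarith)

theorem gridX_nonneg {L : ℝ} {N : ℕ} (hL : 0 ≤ L) (i : ZMod N) : 0 ≤ gridX L N i := by
  unfold gridX
  positivity

section

variable {N : ℕ} [NeZero N]

theorem ZMod.sum_norm_sq_dft (Φ : ZMod N → ℂ) :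
    ∑ k, ‖𝓕 Φ k‖ ^ 2 = N * ∑ j, ‖Φ j‖ ^ 2 := by
  suffices h : ∑ k, conj (𝓕 Φ k) * 𝓕 Φ k = N * ∑ j, conj (Φ j) * Φ j by
    simp only [conj_mul'] at h
    exact_mod_cast h
  calc ∑ k, conj (𝓕 Φ k) * 𝓕 Φ k
      = ∑ k, ∑ j, conj (Φ j) * (ZMod.stdAddChar (-(k * -j)) * 𝓕 Φ k) := by
        refine Finset.sum_congr rfl fun k _ => ?_
        simp only [ZMod.dft_apply, smul_eq_mul, map_sum, map_mul, ← AddChar.map_neg_eq_conj,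
          Finset.sum_mul]
        refine Finset.sum_congr rfl fun j _ => ?_
        ring_nf
    _ = ∑ j, conj (Φ j) * 𝓕 (𝓕 Φ) (-j) := by
        rw [Finset.sum_comm]
        simp only [ZMod.dft_apply, smul_eq_mul, Finset.mul_sum]
    _ = N * ∑ j, conj (Φ j) * Φ j := by
        simp only [ZMod.dft_dft, neg_neg, smul_eq_mul, Finset.mul_sum]
        refine Finset.sum_congr rfl fun j _ => ?_
        ring

theorem ZMod.dft_stdAddChar_mul (a : ZMod N) (Φ : ZMod N → ℂ) (k : ZMod N) :
    𝓕 (fun j => ZMod.stdAddChar (j * a) * Φ j) k = 𝓕 Φ (k - a) := by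
  simp only [ZMod.dft_apply, smul_eq_mul, ← mul_assoc, ← AddChar.map_add_eq_mul]
  refine Finset.sum_congr rfl fun j _ => ?_
  ring_nf

theorem ZMod.norm_one_sub_stdAddChar (i : ZMod N) :
    ‖1 - ZMod.stdAddChar i‖ = 2 * Real.sin (Real.pi * i.val / N) := by
  have hN : (0 : ℝ) < N := by exact_mod_cast Nat.pos_of_ne_zero (NeZero.ne N)
  have hψ : ZMod.stdAddChar i = exp (I * ((2 * Real.pi * i.val / N : ℝ) : ℂ)) := by
    rw [ZMod.stdAddChar_apply, ZMod.toCircle_apply]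
    push_cast
    ring_nf
  have hsin : 0 ≤ Real.sin (Real.pi * i.val / N) := by
    apply Real.sin_nonneg_of_nonneg_of_le_pi (by positivity)
    rw [div_le_iff₀ hN]
    gcongr
    exact_mod_cast (ZMod.val_lt i).le
  rw [norm_sub_rev, hψ, norm_exp_I_mul_ofReal_sub_one, Real.norm_eq_abs,
    show 2 * Real.pi * i.val / N / 2 = Real.pi * i.val / N by ring,
    abs_of_nonneg (mul_nonneg zero_le_two hsin)]

theorem exp_I_kval_mul_gridX {L : ℝ} (hL : L ≠ 0) (j i : ZMod N) :
    exp (I * kval L N j * gridX L N i) = ZMod.stdAddChar (i * j) := by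
  -- the exponent only sees the mode number of `kval` modulo `N`
  obtain ⟨n, hn, hk⟩ : ∃ n : ℤ, (n : ZMod N) = j ∧ kval L N j = n * (2 * Real.pi / L) :=
    ⟨if (j.val : ℤ) ≤ N / 2 then j.val else j.val - N, by split <;> simp,
      by rw [kval]; push_cast; rfl⟩
  have hN : (N : ℂ) ≠ 0 := NeZero.ne _
  have hL' : (L : ℂ) ≠ 0 := ofReal_ne_zero.mpr hL
  have hij : i * j = ((i.val * n : ℤ) : ZMod N) := by push_cast; rw [hn, ZMod.natCast_zmod_val]
  rw [hk, hij, ZMod.stdAddChar_coe]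
  simp only [gridX]
  push_cast
  field_simp

theorem dft_eq_smul_zmod_dft (L : ℝ) (f : ZMod N → ℂ) :
    dft L f = ((L / N : ℝ) : ℂ) • 𝓕 f := by
  rcases eq_or_ne L 0 with rfl | hL
  · ext j; simp [dft]
  ext j
  simp only [dft, ZMod.dft_apply, Pi.smul_apply, smul_eq_mul]
  congr 1
  refine Finset.sum_congr rfl fun i _ => ?_
  rw [neg_mul, neg_mul, exp_neg, exp_I_kval_mul_gridX hL, ← AddChar.map_neg_eq_inv, mul_comm i j]

theorem Dk_dft (L dk : ℝ) (f : ZMod N → ℂ) :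
    Dk dk (dft L f) = dft L (fun i => (1 - ZMod.stdAddChar i) / (dk : ℂ) * f i) := by
  ext j
  have hshift := ZMod.dft_stdAddChar_mul 1 f j
  simp only [mul_one] at hshift
  simp only [Dk, dft_eq_smul_zmod_dft, Pi.smul_apply, smul_eq_mul, ← hshift, ← mul_sub,
    mul_div_assoc, ZMod.dft_apply, ← Finset.sum_sub_distrib, Finset.sum_div]
  congr 1
  refine Finset.sum_congr rfl fun i _ => ?_
  ring

theorem iterate_Dk_dft (L dk : ℝ) (f : ZMod N → ℂ) (m : ℕ) :
    (Dk dk)^[m] (dft L f) = dft L (fun i => ((1 - ZMod.stdAddChar i) / (dk : ℂ)) ^ m * f i) := by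
  induction m with
  | zero => simp
  | succ m ih =>
    rw [Function.iterate_succ_apply', ih, Dk_dft]
    simp only [pow_succ, mul_assoc, mul_left_comm]

theorem wnorm_dft {L : ℝ} (hL : L ≠ 0) (f : ZMod N → ℂ) :
    wnorm (2 * Real.pi / L) (dft L f) = Real.sqrt (2 * Real.pi) * wnorm (L / N) f := by
  have hN : (N : ℝ) ≠ 0 := NeZero.ne _
  have hparseval : ∑ j, ‖dft L f j‖ ^ 2 = (L / N) ^ 2 * N * ∑ i, ‖f i‖ ^ 2 := by
    simp only [dft_eq_smul_zmod_dft, Pi.smul_apply, norm_smul, mul_pow, ← Finset.mul_sum,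
      ZMod.sum_norm_sq_dft, norm_real, Real.norm_eq_abs, sq_abs, mul_assoc]
  rw [wnorm, wnorm, hparseval, ← Real.sqrt_mul (by positivity)]
  congr 1
  field_simp

theorem wnorm_le_of_norm_le {w C : ℝ} (hw : 0 ≤ w) (hC : 0 ≤ C) {f g : ZMod N → ℂ}
    (hfg : ∀ i, ‖f i‖ ≤ C * ‖g i‖) : wnorm w f ≤ C * wnorm w g := by
  rw [wnorm, wnorm, ← Real.sqrt_sq hC, ← Real.sqrt_mul (sq_nonneg C), mul_left_comm]
  gcongr √(w * ?_)
  rw [Finset.mul_sum]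
  gcongr with i
  calc ‖f i‖ ^ 2 ≤ (C * ‖g i‖) ^ 2 := by gcongr; exact hfg i
    _ = C ^ 2 * ‖g i‖ ^ 2 := mul_pow _ _ _

theorem gridX_le {L : ℝ} (hL : 0 ≤ L) (i : ZMod N) : gridX L N i ≤ L := by
  have hN : (0 : ℝ) < N := by exact_mod_cast Nat.pos_of_ne_zero (NeZero.ne N)
  calc (i.val : ℝ) * (L / N) ≤ N * (L / N) := by gcongr; exact_mod_cast (ZMod.val_lt i).le
    _ = L := by field_simp

theorem dfun_gridX_le_norm {L : ℝ} (hL : 0 < L) (i : ZMod N) :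
    dfun L (gridX L N i) ≤
      Real.pi / 2 * ‖(1 - ZMod.stdAddChar i) / ((2 * Real.pi / L : ℝ) : ℂ)‖ := by
  have hN : (0 : ℝ) < N := by exact_mod_cast Nat.pos_of_ne_zero (NeZero.ne N)
  have hx : Real.pi * gridX L N i / L = Real.pi * i.val / N := by
    simp only [gridX]; field_simp
  calc dfun L (gridX L N i) ≤ L / 2 * Real.sin (Real.pi * i.val / N) := by
        rw [← hx]; exact dfun_le_mul_sin hL (gridX_nonneg hL.le i) (gridX_le hL.le i)
    _ = _ := by
        rw [norm_div, ZMod.norm_one_sub_stdAddChar, norm_real, Real.norm_eq_abs,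
          abs_of_pos (by positivity)]
        field_simp

end

theorem stmt_9_general (L : ℝ) (N : ℕ) [NeZero N] (hL : 1 ≤ L)
    (g : ZMod N → ℂ) (m : ℕ) :
    wnorm (L / N) (fun i => ((dfun L (gridX L N i) ^ m : ℝ) : ℂ) * g i) ≤
      (Real.pi / 2) ^ m * (1 / Real.sqrt (2 * Real.pi)) *
        wnorm (2 * Real.pi / L) ((Dk (2 * Real.pi / L))^[m] (dft L g)) := by
  have hL0 : 0 < L := by linarith
  set φ : ZMod N → ℂ := fun i => (1 - ZMod.stdAddChar i) / ((2 * Real.pi / L : ℝ) : ℂ)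
  have hpointwise : ∀ i, ‖((dfun L (gridX L N i) ^ m : ℝ) : ℂ) * g i‖ ≤
      (Real.pi / 2) ^ m * ‖φ i ^ m * g i‖ := by
    intro i
    have hd0 := dfun_nonneg (gridX_nonneg hL0.le i) (gridX_le hL0.le i)
    rw [norm_mul, norm_real, Real.norm_eq_abs, abs_of_nonneg (pow_nonneg hd0 m), norm_mul,
      norm_pow, ← mul_assoc, ← mul_pow]
    gcongr
    exact dfun_gridX_le_norm hL0 i
  calc wnorm (L / N) (fun i => ((dfun L (gridX L N i) ^ m : ℝ) : ℂ) * g i)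
      ≤ (Real.pi / 2) ^ m * wnorm (L / N) (fun i => φ i ^ m * g i) :=
        wnorm_le_of_norm_le (by positivity) (by positivity) hpointwise
    _ = (Real.pi / 2) ^ m * (1 / Real.sqrt (2 * Real.pi)) *
          wnorm (2 * Real.pi / L) (dft L fun i => φ i ^ m * g i) := by
        rw [wnorm_dft hL0.ne']
        field_simp
    _ = _ := by rw [iterate_Dk_dft]

/-- `‖d(·,0)^m g‖_{L²(𝒳)} ≤ (π/2)^m (1/√(2π)) ‖𝒟^{(m)} ĝ‖_{L²(𝒦)}`. -/
theorem stmt_9 (L : ℝ) (N : ℕ) [NeZero N] (hL : 1 ≤ L) (hN : Even N)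
    (g : ZMod N → ℂ) (m : ℕ) (hm : 0 < m) :
    wnorm (L / N) (fun i => ((dfun L (gridX L N i) ^ m : ℝ) : ℂ) * g i) ≤
      (Real.pi / 2) ^ m * (1 / Real.sqrt (2 * Real.pi)) *
        wnorm (2 * Real.pi / L) ((Dk (2 * Real.pi / L))^[m] (dft L g)) :=
  stmt_9_general L N hL g m
end
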